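/- Let G = (V, E) be a 3-regular finite simple graph with a fixed orientation (v_e⁻, v_e⁺) of each edge e, and consider the associated pricing instance. Then the supremum, over all pricings q, of the profit is attained and equals 20·|V| + 4·|E| + max_{S ⊆ V} |{e ∈ E : exactly one endpoint of e lies in S}|. -/

import Mathlib

/-!
Write `s_v = q(v) + q(v₀)`. The twenty customers of `v` pay `20 - deficit s_v`, where the
deficit is nonnegative and vanishes exactly at `s_v ∈ {1, 2}`. The four customers of an edge pay at
most `5` in any case, and at most `4 + (deficit s_{v⁻} + deficit s_{v⁺}) / 3` when both endpoints lie
on the same side of `3 / 2`. As every vertex lies on at most three edges, the vertices pay for the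
deficits charged to the edges, so the profit is at most `20|V| + 4|E|` plus the cut of
`S = {v | 3 / 2 ≤ s_v}`. Conversely, pricing `v` at `2` on `S` and `1` off `S`, `v₀` at `0`, and
`x_e` at `1` exactly when `v_e⁻ ∉ S ∋ v_e⁺` attains `20|V| + 4|E| + cut(S)`.
-/

/-- A customer with bundle price `x` and budget `B` pays `x` if `x ≤ B` and `0`
otherwise (negative prices are allowed). -/
noncomputable def pay (x B : ℝ) : ℝ := if x ≤ B then x else 0

/-- The profit of the pricing instance associated with an oriented graph with
vertex items `V` (prices `qV`), edge items indexed by `E` (prices `qx`) and one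
extra item `v₀` (price `q0`): for each edge `e` there is one customer with bundle
`{v_e⁻, x_e}` and budget `2`, two customers with bundle `{v_e⁺, x_e}` and budget
`1`, and one customer with bundle `{v_e⁺, x_e}` and budget `3`; for each vertex
`v` there are ten customers with bundle `{v, v₀}` and budget `1` and ten with
budget `2`. -/
noncomputable def graphProfit {V E : Type*} [Fintype V] [Fintype E]
    (vm vp : E → V) (qV : V → ℝ) (qx : E → ℝ) (q0 : ℝ) : ℝ :=
  (∑ e : E, (pay (qV (vm e) + qx e) 2 + 2 * pay (qV (vp e) + qx e) 1 +
      pay (qV (vp e) + qx e) 3)) +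
    ∑ v : V, (10 * pay (qV v + q0) 1 + 10 * pay (qV v + q0) 2)

open Finset

noncomputable def deficit (s : ℝ) : ℝ := 20 - (10 * pay s 1 + 10 * pay s 2)

noncomputable def edgeRevenue (u w : ℝ) : ℝ := pay u 2 + 2 * pay w 1 + pay w 3

def cutSize {V E : Type*} [Fintype E] [DecidableEq V] (vm vp : E → V) (S : Finset V) : ℕ :=
  #{e | Xor (vm e ∈ S) (vp e ∈ S)}

lemma deficit_nonneg (s : ℝ) : 0 ≤ deficit s := by
  unfold deficit pay; split_ifs <;> linarith

lemma edgeRevenue_le_five (u w : ℝ) : edgeRevenue u w ≤ 5 := by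
  unfold edgeRevenue pay; split_ifs <;> linarith

lemma edgeRevenue_le_of_iff {s t : ℝ} (c : ℝ) (h : 3 / 2 ≤ s ↔ 3 / 2 ≤ t) :
    edgeRevenue (s + c) (t + c) ≤ 4 + (deficit s + deficit t) / 3 := by
  unfold edgeRevenue deficit pay
  by_cases hs : 3 / 2 ≤ s
  · have ht := h.mp hs
    split_ifs <;> linarith
  · have ht := mt h.mpr hs
    split_ifs <;> linarith

lemma edgeRevenue_le (s t c : ℝ) :
    edgeRevenue (s + c) (t + c) ≤
      4 + (if Xor (3 / 2 ≤ s) (3 / 2 ≤ t) then 1 else 0) + (deficit s + deficit t) / 3 := by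
  split_ifs with h
  · linarith [edgeRevenue_le_five (s + c) (t + c), deficit_nonneg s, deficit_nonneg t]
  · linarith [edgeRevenue_le_of_iff c ((not_xor _ _).mp h)]

section Profit

variable {V E : Type*} [Fintype V] [Fintype E] (vm vp : E → V)

lemma graphProfit_eq (qV : V → ℝ) (qx : E → ℝ) (q0 : ℝ) :
    graphProfit vm vp qV qx q0 =
      ∑ e, edgeRevenue (qV (vm e) + qx e) (qV (vp e) + qx e) + ∑ v, (20 - deficit (qV v + q0)) := by
  simp only [graphProfit, edgeRevenue, deficit, sub_sub_cancel]

lemma graphProfit_cutPricing [DecidableEq V] (S : Finset V) :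
    graphProfit vm vp (fun v => if v ∈ S then 2 else 1)
      (fun e => if vm e ∉ S ∧ vp e ∈ S then 1 else 0) 0 =
      20 * Fintype.card V + 4 * Fintype.card E + cutSize vm vp S := by
  have hvertex (v : V) : deficit ((if v ∈ S then 2 else 1) + 0) = 0 := by
    by_cases h : v ∈ S <;> norm_num [h, deficit, pay]
  have hedge (e : E) :
      edgeRevenue ((if vm e ∈ S then 2 else 1) + if vm e ∉ S ∧ vp e ∈ S then 1 else 0)
        ((if vp e ∈ S then 2 else 1) + if vm e ∉ S ∧ vp e ∈ S then 1 else 0) =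
      4 + if Xor (vm e ∈ S) (vp e ∈ S) then 1 else 0 := by
    by_cases hm : vm e ∈ S <;> by_cases hp : vp e ∈ S <;> norm_num [hm, hp, edgeRevenue, pay]
  simp only [graphProfit_eq, hvertex, hedge, sum_add_distrib, sum_boole, sum_const, card_univ,
    nsmul_eq_mul, sub_zero, cutSize]
  ring

end Profit

section Orientation

variable {V : Type*} [Fintype V] [DecidableEq V] {G : SimpleGraph V} [DecidableRel G.Adj]
  [Fintype G.edgeSet] {vm vp : G.edgeSet → V}

lemma card_filter_mem_edge_eq_degree (v : V) :
    #{e : G.edgeSet | v ∈ (e : Sym2 V)} = G.degree v := by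
  rw [← G.card_incidenceFinset_eq_degree, G.incidenceFinset_eq_filter]
  refine card_bij (fun e _ => (e : Sym2 V)) (fun e he => ?_) (fun _ _ _ _ h => Subtype.ext h)
    (fun e he => ?_)
  · exact mem_filter.mpr ⟨G.mem_edgeFinset.mpr e.2, (mem_filter.mp he).2⟩
  · obtain ⟨he, hv⟩ := mem_filter.mp he
    exact ⟨⟨e, G.mem_edgeFinset.mp he⟩, mem_filter.mpr ⟨mem_univ _, hv⟩, rfl⟩

lemma sum_endpoints_eq_sum_degree_smul {M : Type*} [AddCommMonoid M]
    (horient : ∀ e : G.edgeSet, (e : Sym2 V) = s(vm e, vp e)) (f : V → M) :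
    ∑ e, (f (vm e) + f (vp e)) = ∑ v, G.degree v • f v := by
  have hpair (e : G.edgeSet) : f (vm e) + f (vp e) = ∑ v with v ∈ (e : Sym2 V), f v := by
    have hadj : G.Adj (vm e) (vp e) := by simpa [horient e] using e.2
    rw [show ({v | v ∈ (e : Sym2 V)} : Finset V) = {vm e, vp e} by ext; simp [horient e],
      sum_pair hadj.ne]
  simp_rw [hpair, ← card_filter_mem_edge_eq_degree, ← sum_const]
  exact sum_comm' (by simp)

lemma graphProfit_le_of_degree_le (hdeg : ∀ v, G.degree v ≤ 3)
    (horient : ∀ e : G.edgeSet, (e : Sym2 V) = s(vm e, vp e)) (qV : V → ℝ) (qx : G.edgeSet → ℝ)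
    (q0 : ℝ) :
    graphProfit vm vp qV qx q0 ≤ 20 * Fintype.card V + 4 * Fintype.card G.edgeSet +
      cutSize vm vp {v | 3 / 2 ≤ qV v + q0} := by
  set S : Finset V := {v | 3 / 2 ≤ qV v + q0}
  set d : V → ℝ := fun v => deficit (qV v + q0)
  have hedge (e : G.edgeSet) : edgeRevenue (qV (vm e) + qx e) (qV (vp e) + qx e) ≤
      4 + (if Xor (vm e ∈ S) (vp e ∈ S) then 1 else 0) + (d (vm e) + d (vp e)) / 3 := by
    simpa [S, d, add_add_sub_cancel] using
      edgeRevenue_le (qV (vm e) + q0) (qV (vp e) + q0) (qx e - q0)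
  have hload : ∑ e, (d (vm e) + d (vp e)) ≤ 3 * ∑ v, d v := by
    rw [sum_endpoints_eq_sum_degree_smul horient, mul_sum]
    gcongr with v
    rw [nsmul_eq_mul]
    exact mul_le_mul_of_nonneg_right (by exact_mod_cast hdeg v) (deficit_nonneg _)
  rw [graphProfit_eq]
  calc _ ≤ ∑ e, (4 + (if Xor (vm e ∈ S) (vp e ∈ S) then 1 else 0) + (d (vm e) + d (vp e)) / 3) +
        ∑ v, (20 - d v) := by gcongr with e; exact hedge e
    _ ≤ _ := by
      rw [sum_add_distrib, sum_add_distrib, sum_boole, ← sum_div, sum_sub_distrib]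
      simp only [sum_const, card_univ, nsmul_eq_mul, cutSize]
      linarith

end Orientation

/-- maximum profit = `20|V| + 4|E| + maxcut`.
For a 3-regular finite simple graph `G` with a fixed orientation `(vm e, vp e)`
of each edge, the supremum of the profit over all pricings of the associated
instance is attained and equals
`20|V| + 4|E| + max_{S ⊆ V} #{e : exactly one endpoint of e lies in S}`. -/
theorem graph_pricing_maxcut
    {V : Type*} [Fintype V] [DecidableEq V]
    (G : SimpleGraph V) [DecidableRel G.Adj] [Fintype G.edgeSet]
    (hreg : G.IsRegularOfDegree 3)
    (vm vp : G.edgeSet → V)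
    (horient : ∀ e : G.edgeSet, (e : Sym2 V) = s(vm e, vp e)) :
    IsGreatest
      {x : ℝ | ∃ (qV : V → ℝ) (qx : G.edgeSet → ℝ) (q0 : ℝ),
        x = graphProfit vm vp qV qx q0}
      (20 * (Fintype.card V : ℝ) + 4 * (Fintype.card G.edgeSet : ℝ) +
        (((Finset.univ : Finset V).powerset.sup (fun S =>
          (Finset.univ.filter
            (fun e : G.edgeSet => Xor (vm e ∈ S) (vp e ∈ S))).card) : ℕ) : ℝ)) := by
  constructor
  · obtain ⟨S, -, hS⟩ := exists_mem_eq_sup univ.powerset ⟨∅, empty_mem_powerset _⟩ (cutSize vm vp)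
    exact ⟨_, _, 0, by rw [graphProfit_cutPricing]; exact congrArg _ (congrArg Nat.cast hS)⟩
  · rintro _ ⟨qV, qx, q0, rfl⟩
    refine (graphProfit_le_of_degree_le (fun v => (hreg v).le) horient qV qx q0).trans ?_
    gcongr
    exact le_sup (f := cutSize vm vp) (mem_powerset.mpr (subset_univ _))
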